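/- Let f : ℝ^d → ℝ be CPWL with compatible polyhedral partition (R_k)_{k=1}^K, and let 𝓕 = ⋃_{k∼ℓ} F_{k,ℓ} be the set of all frontier points. Suppose that for every x ∈ 𝓕 there exists a neighborhood 𝒩 of x such that for all x₁, x₂ ∈ 𝒩 \ 𝓕, f is differentiable at x₁ and at x₂ and ⟨∇f(x₁) − ∇f(x₂), x₁ − x₂⟩ ≥ 0. Then f is convex on ℝ^d. -/

import Mathlib

open Set Metric
open scoped RealInnerProductSpace
open Filter Topology

/-- A convex polyhedron in `ℝ^d`: a nonempty intersection of finitely many closed half-spaces. -/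
def IsConvexPolyhedron {d : ℕ} (S : Set (EuclideanSpace ℝ (Fin d))) : Prop :=
  S.Nonempty ∧ ∃ (m : ℕ) (a : Fin m → EuclideanSpace ℝ (Fin d)) (c : Fin m → ℝ),
    S = {x | ∀ i, ⟪a i, x⟫ ≤ c i}

/-- A polyhedral partition of `ℝ^d`: a finite family of convex polyhedra covering `ℝ^d`,
each with nonempty interior, and with pairwise disjoint interiors. -/
def IsPolyhedralPartition {d K : ℕ} (R : Fin K → Set (EuclideanSpace ℝ (Fin d))) : Prop :=
  (∀ k, IsConvexPolyhedron (R k)) ∧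
  (⋃ k, R k) = Set.univ ∧
  (∀ k, (interior (R k)).Nonempty) ∧
  (∀ k l, k ≠ l → interior (R k) ∩ interior (R l) = ∅)

/-- Regions `R k` and `R l` are neighboring: `k ≠ l` and the affine hull of `R k ∩ R l`
is an affine hyperplane, i.e. has dimension `d - 1`. -/
def Neighboring {d K : ℕ} (R : Fin K → Set (EuclideanSpace ℝ (Fin d))) (k l : Fin K) : Prop :=
  k ≠ l ∧ (R k ∩ R l).Nonempty ∧
    Module.finrank ℝ (affineSpan ℝ (R k ∩ R l)).direction = d - 1

/-- The frontier between two regions: the relative interior of `R k ∩ R l`. -/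
noncomputable def frontierBetween {d K : ℕ} (R : Fin K → Set (EuclideanSpace ℝ (Fin d)))
    (k l : Fin K) : Set (EuclideanSpace ℝ (Fin d)) :=
  intrinsicInterior ℝ (R k ∩ R l)

/-- The set `𝓕` of all frontier points: the union of all frontiers between
neighboring regions. -/
noncomputable def frontierPoints {d K : ℕ} (R : Fin K → Set (EuclideanSpace ℝ (Fin d))) :
    Set (EuclideanSpace ℝ (Fin d)) :=
  ⋃ (k) (l) (_ : Neighboring R k l), frontierBetween R k l


/-- Slope chaining: if the slope on `[x,y]` is at most the slope on `[y,z]`, then the slope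
on `[x,z]` is between them. -/
lemma slope_chain {g : ℝ → ℝ} {x y z : ℝ} (hxy : x < y) (hyz : y < z)
    (h : (g y - g x) / (y - x) ≤ (g z - g y) / (z - y)) :
    (g y - g x) / (y - x) ≤ (g z - g x) / (z - x) ∧
      (g z - g x) / (z - x) ≤ (g z - g y) / (z - y) := by
  have h1 : (0:ℝ) < y - x := by linarith
  have h2 : (0:ℝ) < z - y := by linarith
  have h3 : (0:ℝ) < z - x := by linarith
  rw [div_le_div_iff₀ h1 h2] at h
  constructor
  · rw [div_le_div_iff₀ h1 h3]; nlinarith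
  · rw [div_le_div_iff₀ h3 h2]; nlinarith

/-- Mean value inequality with a finite exceptional set: if `g` is continuous on `[a,b]`,
differentiable off a finite set `T` with derivative at most `M`, then `g b - g a ≤ M (b-a)`. -/
lemma sub_le_of_derivAt_le {T : Set ℝ} (hT : T.Finite) {g g' : ℝ → ℝ} {M : ℝ} :
    ∀ (n : ℕ) (a b : ℝ), a ≤ b → ContinuousOn g (Icc a b) →
    (∀ t ∈ Ioo a b \ T, HasDerivAt g (g' t) t) →
    (∀ t ∈ Ioo a b \ T, g' t ≤ M) → (T ∩ Ioo a b).ncard ≤ n →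
    g b - g a ≤ M * (b - a) := by
  have base : ∀ a b : ℝ, a ≤ b → ContinuousOn g (Icc a b) →
      (∀ t ∈ Ioo a b \ T, HasDerivAt g (g' t) t) →
      (∀ t ∈ Ioo a b \ T, g' t ≤ M) → (T ∩ Ioo a b) = ∅ →
      g b - g a ≤ M * (b - a) := by
    intro a b hab hc hd hb hempty
    rcases eq_or_lt_of_le hab with rfl | hab
    · simp
    have hTd : ∀ t ∈ Ioo a b, t ∉ T := by
      intro t ht hT'
      exact absurd (Set.mem_inter hT' ht) (by rw [hempty]; exact notMem_empty t)
    set h : ℝ → ℝ := fun t => g t - M * t with hh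
    have hcont : ContinuousOn h (Icc a b) :=
      hc.sub ((continuous_const.mul continuous_id).continuousOn)
    have hder : ∀ t ∈ Ioo a b, HasDerivAt h (g' t - M) t := by
      intro t ht
      have h1 : HasDerivAt g (g' t) t := hd t ⟨ht, hTd t ht⟩
      have h2 : HasDerivAt (fun s : ℝ => M * s) (M * 1) t := (hasDerivAt_id t).const_mul M
      rw [mul_one] at h2
      exact h1.sub h2
    have hanti : AntitoneOn h (Icc a b) := by
      apply antitoneOn_of_deriv_nonpos (convex_Icc a b) hcont
      · intro t ht
        rw [interior_Icc] at ht
        exact ((hder t ht).differentiableAt).differentiableWithinAt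
      · intro t ht
        rw [interior_Icc] at ht
        rw [(hder t ht).deriv]
        have := hb t ⟨ht, hTd t ht⟩
        linarith
    have := hanti (left_mem_Icc.2 hab.le) (right_mem_Icc.2 hab.le) hab.le
    simp only [hh] at this
    nlinarith
  intro n
  induction n with
  | zero =>
    intro a b hab hc hd hb hn
    refine base a b hab hc hd hb ?_
    have : (T ∩ Ioo a b).Finite := hT.inter_of_left _
    exact Set.ncard_eq_zero this |>.1 (Nat.le_zero.1 hn)
  | succ n ih =>
    intro a b hab hc hd hb hn
    rcases Set.eq_empty_or_nonempty (T ∩ Ioo a b) with hempty | ⟨c, hcT, hcI⟩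
    · exact base a b hab hc hd hb hempty
    have hfin : (T ∩ Ioo a b).Finite := hT.inter_of_left _
    have hac : a ≤ c := hcI.1.le
    have hcb : c ≤ b := hcI.2.le
    have hcard : ∀ x y : ℝ, Ioo x y ⊆ Ioo a b → c ∉ Ioo x y → (T ∩ Ioo x y).ncard ≤ n := by
      intro x y hsub hcn
      have hsub2 : T ∩ Ioo x y ⊆ (T ∩ Ioo a b) \ {c} := by
        intro t ⟨ht1, ht2⟩
        exact ⟨⟨ht1, hsub ht2⟩, by rintro rfl; exact hcn ht2⟩
      have h1 : (T ∩ Ioo x y).ncard ≤ ((T ∩ Ioo a b) \ {c}).ncard :=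
        Set.ncard_le_ncard hsub2 hfin.diff
      have h2 : ((T ∩ Ioo a b) \ {c}).ncard < (T ∩ Ioo a b).ncard :=
        Set.ncard_diff_singleton_lt_of_mem ⟨hcT, hcI⟩ hfin
      omega
    have r1 : g c - g a ≤ M * (c - a) := by
      refine ih a c hac (hc.mono (Icc_subset_Icc le_rfl hcb)) ?_ ?_ ?_
      · intro t ht; exact hd t ⟨Ioo_subset_Ioo le_rfl hcb ht.1, ht.2⟩
      · intro t ht; exact hb t ⟨Ioo_subset_Ioo le_rfl hcb ht.1, ht.2⟩
      · exact hcard a c (Ioo_subset_Ioo le_rfl hcb) (by simp)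
    have r2 : g b - g c ≤ M * (b - c) := by
      refine ih c b hcb (hc.mono (Icc_subset_Icc hac le_rfl)) ?_ ?_ ?_
      · intro t ht; exact hd t ⟨Ioo_subset_Ioo hac le_rfl ht.1, ht.2⟩
      · intro t ht; exact hb t ⟨Ioo_subset_Ioo hac le_rfl ht.1, ht.2⟩
      · exact hcard c b (Ioo_subset_Ioo hac le_rfl) (by simp)
    linarith

lemma le_sub_of_derivAt_ge {T : Set ℝ} (hT : T.Finite) {g g' : ℝ → ℝ} {m : ℝ}
    {a b : ℝ} (hab : a ≤ b) (hc : ContinuousOn g (Icc a b))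
    (hd : ∀ t ∈ Ioo a b \ T, HasDerivAt g (g' t) t)
    (hb : ∀ t ∈ Ioo a b \ T, m ≤ g' t) :
    m * (b - a) ≤ g b - g a := by
  have := sub_le_of_derivAt_le hT ((T ∩ Ioo a b).ncard) a b hab
    (g := fun t => - g t) (g' := fun t => - g' t) (M := -m)
    (hc.neg) (fun t ht => (hd t ht).neg) (fun t ht => by simpa using hb t ht) le_rfl
  linarith

/-- Convexity from a monotone derivative off a finite exceptional set. -/
lemma convexOn_Icc_of_derivAt {T : Set ℝ} (hT : T.Finite) {g g' : ℝ → ℝ} {a b : ℝ}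
    (hc : ContinuousOn g (Icc a b))
    (hd : ∀ t ∈ Ioo a b \ T, HasDerivAt g (g' t) t)
    (hm : ∀ s t, s ∈ Ioo a b \ T → t ∈ Ioo a b \ T → s ≤ t → g' s ≤ g' t) :
    ConvexOn ℝ (Icc a b) g := by
  refine convexOn_of_slope_mono_adjacent (convex_Icc a b) ?_
  intro p q r hp hr hpq hqr
  have hap : a ≤ p := hp.1
  have hrb : r ≤ b := hr.2
  have key : ∀ q', p < q' → q' < r → q' ∉ T →
      (g q' - g p) / (q' - p) ≤ (g r - g q') / (r - q') := by
    intro w hpw hwr hwT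
    have hwI : w ∈ Ioo a b \ T := ⟨⟨lt_of_le_of_lt hap hpw, lt_of_lt_of_le hwr hrb⟩, hwT⟩
    have up : g w - g p ≤ g' w * (w - p) := by
      refine sub_le_of_derivAt_le hT (g' := g') ((T ∩ Ioo p w).ncard) p w hpw.le
        (hc.mono (Icc_subset_Icc hap (by linarith))) ?_ ?_ le_rfl
      · intro t ht
        exact hd t ⟨⟨lt_of_le_of_lt hap ht.1.1, by linarith [ht.1.2]⟩, ht.2⟩
      · intro t ht
        exact hm t w ⟨⟨lt_of_le_of_lt hap ht.1.1, by linarith [ht.1.2]⟩, ht.2⟩ hwI ht.1.2.le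
    have lo : g' w * (r - w) ≤ g r - g w := by
      refine le_sub_of_derivAt_ge hT (g' := g') hwr.le
        (hc.mono (Icc_subset_Icc (by linarith) hrb)) ?_ ?_
      · intro t ht
        exact hd t ⟨⟨by linarith [ht.1.1], lt_of_lt_of_le ht.1.2 hrb⟩, ht.2⟩
      · intro t ht
        exact hm w t hwI ⟨⟨by linarith [ht.1.1], lt_of_lt_of_le ht.1.2 hrb⟩, ht.2⟩ ht.1.1.le
    have h1 : (g w - g p) / (w - p) ≤ g' w := by
      rw [div_le_iff₀ (by linarith)]; linarith
    have h2 : g' w ≤ (g r - g w) / (r - w) := by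
      rw [le_div_iff₀ (by linarith)]; linarith
    linarith
  by_cases hqT : q ∈ T
  · have hrq : (0:ℝ) < r - q := by linarith
    have hne : ∀ n : ℕ, ((Ioo q (q + (r - q) / (n + 1))) \ T).Nonempty := by
      intro n
      have hlt : q < q + (r - q) / (n + 1) := by
        have : (0:ℝ) < (r - q) / (n + 1) := by positivity
        linarith
      exact ((Set.Ioo_infinite hlt).diff hT).nonempty
    choose qq hqq using hne
    have hbound : ∀ n : ℕ, q < qq n ∧ qq n < q + (r - q) * (1 / (n + 1)) ∧ qq n ∉ T := by
      intro n
      obtain ⟨⟨h1, h2⟩, h3⟩ := hqq n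
      exact ⟨h1, by rw [mul_one_div]; exact h2, h3⟩
    have hqqr : ∀ n : ℕ, qq n < r := by
      intro n
      have h0 := (hbound n).2.1
      have h1 : (r - q) * (1 / ((n:ℝ) + 1)) ≤ (r - q) * 1 := by
        apply mul_le_mul_of_nonneg_left _ hrq.le
        rw [div_le_one (by positivity)]
        have : (0:ℝ) ≤ (n:ℝ) := Nat.cast_nonneg n
        linarith
      nlinarith [h0, h1]
    have hlim : Tendsto qq atTop (𝓝 q) := by
      have hup : Tendsto (fun n : ℕ => q + (r - q) * (1 / ((n:ℝ) + 1))) atTop (𝓝 (q + (r - q) * 0)) :=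
        (tendsto_one_div_add_atTop_nhds_zero_nat.const_mul (r - q)).const_add q
      rw [mul_zero, add_zero] at hup
      exact tendsto_of_tendsto_of_tendsto_of_le_of_le tendsto_const_nhds hup
        (fun n => (hbound n).1.le) (fun n => (hbound n).2.1.le)
    have hqmem : q ∈ Icc a b := ⟨by linarith, by linarith⟩
    have hgq : Tendsto (fun n => g (qq n)) atTop (𝓝 (g q)) := by
      have hwithin : Tendsto qq atTop (𝓝[Icc a b] q) :=
        tendsto_nhdsWithin_of_tendsto_nhds_of_eventually_within qq hlim
          (Eventually.of_forall fun n =>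
            ⟨by linarith [(hbound n).1], by linarith [hqqr n]⟩)
      exact ((hc q hqmem).tendsto).comp hwithin
    have hA : Tendsto (fun n => (g (qq n) - g p) / (qq n - p)) atTop
        (𝓝 ((g q - g p) / (q - p))) :=
      Tendsto.div (hgq.sub tendsto_const_nhds) (hlim.sub tendsto_const_nhds)
        (sub_ne_zero.2 (ne_of_gt hpq))
    have hB : Tendsto (fun n => (g r - g (qq n)) / (r - qq n)) atTop
        (𝓝 ((g r - g q) / (r - q))) :=
      Tendsto.div (tendsto_const_nhds.sub hgq) (tendsto_const_nhds.sub hlim)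
        (sub_ne_zero.2 (ne_of_gt hqr))
    exact le_of_tendsto_of_tendsto' hA hB
      (fun n => key (qq n) (hpq.trans (hbound n).1) (hqqr n) (hbound n).2.2)
  · exact key q hpq hqr hqT

/-- Gluing two overlapping convexity intervals. -/
lemma convexOn_Icc_glue {g : ℝ → ℝ} {a b c e : ℝ} (hab : a ≤ b) (hbc : b < c) (hce : c ≤ e)
    (h1 : ConvexOn ℝ (Icc a c) g) (h2 : ConvexOn ℝ (Icc b e) g) : ConvexOn ℝ (Icc a e) g := by
  refine convexOn_of_slope_mono_adjacent (convex_Icc a e) ?_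
  intro p q r hp hr hpq hqr
  have hpa : a ≤ p := hp.1
  have hre : r ≤ e := hr.2
  by_cases hrc : r ≤ c
  · exact h1.slope_mono_adjacent ⟨hpa, by linarith⟩ ⟨by linarith, hrc⟩ hpq hqr
  push_neg at hrc
  by_cases hpb : b ≤ p
  · exact h2.slope_mono_adjacent ⟨hpb, by linarith⟩ ⟨by linarith, hre⟩ hpq hqr
  push_neg at hpb
  by_cases hqb : b ≤ q
  · by_cases hqc : q < c
    · set w := (q + c)/2 with hw
      have hqw : q < w := by rw [hw]; linarith
      have hwc : w < c := by rw [hw]; linarith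
      have s1 : (g q - g p)/(q - p) ≤ (g w - g q)/(w - q) :=
        h1.slope_mono_adjacent ⟨hpa, by linarith⟩ ⟨by linarith, hwc.le⟩ hpq hqw
      have s2 : (g w - g q)/(w - q) ≤ (g r - g w)/(r - w) :=
        h2.slope_mono_adjacent ⟨hqb, by linarith⟩ ⟨by linarith, hre⟩ hqw (by linarith)
      have s3 := (slope_chain hqw (by linarith : w < r) s2).1
      linarith
    · push_neg at hqc
      set w2 := (b + c)/2 with hw2
      set w1 := (b + w2)/2 with hw1
      have hbw2 : b < w2 := by rw [hw2]; linarith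
      have hw2c : w2 < c := by rw [hw2]; linarith
      have hbw1 : b < w1 := by rw [hw1]; linarith
      have hw12 : w1 < w2 := by rw [hw1]; linarith
      have hpw1 : p < w1 := by linarith
      have hw2q : w2 < q := by linarith
      have s1 : (g w1 - g p)/(w1 - p) ≤ (g w2 - g w1)/(w2 - w1) :=
        h1.slope_mono_adjacent ⟨hpa, by linarith⟩ ⟨by linarith, hw2c.le⟩ hpw1 hw12
      have s2 : (g w2 - g w1)/(w2 - w1) ≤ (g q - g w2)/(q - w2) :=
        h2.slope_mono_adjacent ⟨hbw1.le, by linarith⟩ ⟨by linarith, by linarith⟩ hw12 hw2q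
      have t1 := (slope_chain hpw1 hw12 s1).2
      have t2 : (g w2 - g p)/(w2 - p) ≤ (g q - g w2)/(q - w2) := by linarith
      have t3 := (slope_chain (by linarith : p < w2) hw2q t2).2
      have s3 : (g q - g w2)/(q - w2) ≤ (g r - g q)/(r - q) :=
        h2.slope_mono_adjacent ⟨by linarith, by linarith⟩ ⟨by linarith, hre⟩ hw2q hqr
      linarith
  · push_neg at hqb
    set w1 := (b + c)/2 with hw1
    set w2 := (w1 + c)/2 with hw2
    have hbw1 : b < w1 := by rw [hw1]; linarith
    have hw1c : w1 < c := by rw [hw1]; linarith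
    have hw12 : w1 < w2 := by rw [hw2]; linarith
    have hw2c : w2 < c := by rw [hw2]; linarith
    have hqw1 : q < w1 := by linarith
    have s1 : (g q - g p)/(q - p) ≤ (g w1 - g q)/(w1 - q) :=
      h1.slope_mono_adjacent ⟨hpa, by linarith⟩ ⟨by linarith, hw1c.le⟩ hpq hqw1
    have s2 : (g w1 - g q)/(w1 - q) ≤ (g w2 - g w1)/(w2 - w1) :=
      h1.slope_mono_adjacent ⟨by linarith, by linarith⟩ ⟨by linarith, hw2c.le⟩ hqw1 hw12
    have s3 : (g w2 - g w1)/(w2 - w1) ≤ (g r - g w2)/(r - w2) :=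
      h2.slope_mono_adjacent ⟨hbw1.le, by linarith⟩ ⟨by linarith, hre⟩ hw12 (by linarith)
    have t1 := (slope_chain hqw1 hw12 s2).1
    have t2 := (slope_chain hqw1 hw12 s2).2
    have t3 : (g w2 - g q)/(w2 - q) ≤ (g r - g w2)/(r - w2) := by linarith
    have t4 := (slope_chain (by linarith : q < w2) (by linarith : w2 < r) t3).1
    linarith

/-- Convexity on a closed interval from convexity on all shorter intervals, by continuity. -/
lemma convexOn_Icc_of_forall_lt {g : ℝ → ℝ} {a T : ℝ} (haT : a < T) (hc : Continuous g)
    (h : ∀ t, a ≤ t → t < T → ConvexOn ℝ (Icc a t) g) : ConvexOn ℝ (Icc a T) g := by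
  refine convexOn_of_slope_mono_adjacent (convex_Icc a T) ?_
  intro p q r hp hr hpq hqr
  rcases eq_or_lt_of_le hr.2 with rfl | hrT
  · have hev : ∀ᶠ t in 𝓝[<] r, (g q - g p)/(q - p) ≤ (g t - g q)/(t - q) := by
      filter_upwards [Ioo_mem_nhdsLT_of_mem (Set.mem_Ioc.2 ⟨hqr, le_rfl⟩)] with t ht
      exact (h ((t + r)/2) (by linarith [hp.1, ht.1, ht.2]) (by linarith [ht.1, ht.2])).slope_mono_adjacent
        ⟨hp.1, by linarith [ht.1, ht.2, hp.1]⟩ ⟨by linarith [hp.1, ht.1, ht.2], by linarith [ht.1, ht.2]⟩ hpq ht.1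
    have htd : Tendsto (fun t => (g t - g q)/(t - q)) (𝓝[<] r) (𝓝 ((g r - g q)/(r - q))) := by
      apply Tendsto.mono_left ?_ nhdsWithin_le_nhds
      exact Tendsto.div ((hc.tendsto r).sub tendsto_const_nhds)
        ((continuous_id.sub continuous_const).tendsto r) (sub_ne_zero.2 (ne_of_gt hqr))
    exact ge_of_tendsto htd hev
  · exact (h ((r + T)/2) (by linarith [hp.1]) (by linarith)).slope_mono_adjacent
      ⟨hp.1, by linarith [hp.1]⟩ ⟨by linarith [hp.1], by linarith⟩ hpq hqr

/-- Transfer of convexity through equality on the set. -/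
lemma convexOn_congr {E : Type*} [AddCommGroup E] [Module ℝ E] {s : Set E} {g h : E → ℝ}
    (hh : ConvexOn ℝ s h) (hgh : ∀ x ∈ s, g x = h x) : ConvexOn ℝ s g := by
  refine ⟨hh.1, fun x hx y hy α β hα hβ hαβ => ?_⟩
  rw [hgh x hx, hgh y hy, hgh _ (hh.1 hx hy hα hβ hαβ)]
  exact hh.2 hx hy hα hβ hαβ


noncomputable section

variable {d : ℕ}

/-- The cone from apex `x₀` over a set `S`. -/
def coneSet {E : Type*} [AddCommGroup E] [Module ℝ E] (x₀ : E) (S : Set E) : Set E :=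
  {y | ∃ t : ℝ, 0 ≤ t ∧ ∃ s ∈ S, y = x₀ + t • (s - x₀)}

lemma dense_compl_affineSubspace (W : AffineSubspace ℝ (EuclideanSpace ℝ (Fin d)))
    (hW : W ≠ ⊤) : Dense ((W : Set (EuclideanSpace ℝ (Fin d)))ᶜ) := by
  rw [← interior_eq_empty_iff_dense_compl]
  by_contra h
  obtain ⟨x, hx⟩ := Set.nonempty_iff_ne_empty.2 h
  obtain ⟨ε, hε, hball⟩ := Metric.mem_nhds_iff.1 (mem_interior_iff_mem_nhds.1 hx)
  apply hW
  have hxW : x ∈ W := interior_subset hx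
  have hdir : ∀ v : EuclideanSpace ℝ (Fin d), v ∈ W.direction := by
    intro v
    by_cases hv : v = 0
    · simp [hv]
    have hvn : (0:ℝ) < ‖v‖ := norm_pos_iff.2 hv
    have hmem : x + (ε / 2 / ‖v‖) • v ∈ W := by
      apply hball
      rw [mem_ball, dist_eq_norm]
      have : ‖x + (ε / 2 / ‖v‖) • v - x‖ = ε / 2 / ‖v‖ * ‖v‖ := by
        rw [add_sub_cancel_left, norm_smul, Real.norm_eq_abs,
          abs_of_pos (by positivity : (0:ℝ) < ε / 2 / ‖v‖)]
      rw [this, div_mul_cancel₀ _ hvn.ne']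
      linarith
    have h1 : (x + (ε / 2 / ‖v‖) • v) -ᵥ x ∈ W.direction :=
      AffineSubspace.vsub_mem_direction hmem hxW
    rw [vsub_eq_sub, add_sub_cancel_left] at h1
    have h2 := W.direction.smul_mem (ε / 2 / ‖v‖)⁻¹ h1
    rwa [smul_smul, inv_mul_cancel₀ (by positivity : (ε / 2 / ‖v‖) ≠ 0), one_smul] at h2
  rw [eq_top_iff]
  intro y _
  have : y -ᵥ x ∈ W.direction := hdir _
  simpa using AffineSubspace.vadd_mem_of_mem_direction this hxW

/-- `intrinsicInterior` is relatively open. -/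
lemma exists_isOpen_intrinsicInterior (C : Set (EuclideanSpace ℝ (Fin d))) :
    ∃ V : Set (EuclideanSpace ℝ (Fin d)), IsOpen V ∧
      intrinsicInterior ℝ C = V ∩ (affineSpan ℝ C : Set (EuclideanSpace ℝ (Fin d))) := by
  have hopen : IsOpen (interior ((Subtype.val : affineSpan ℝ C → _) ⁻¹' C)) := isOpen_interior
  rw [isOpen_induced_iff] at hopen
  obtain ⟨V, hV, hpre⟩ := hopen
  refine ⟨V, hV, ?_⟩
  ext y
  constructor
  · intro hy
    rw [mem_intrinsicInterior] at hy
    obtain ⟨⟨y', hy'⟩, hyi, rfl⟩ := hy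
    rw [← hpre] at hyi
    exact ⟨hyi, hy'⟩
  · rintro ⟨hyV, hyW⟩
    rw [mem_intrinsicInterior]
    exact ⟨⟨y, hyW⟩, by rw [← hpre]; exact hyV, rfl⟩

lemma mem_intrinsicInterior_of_ball_inter {C : Set (EuclideanSpace ℝ (Fin d))}
    {q : EuclideanSpace ℝ (Fin d)} (hq : q ∈ affineSpan ℝ C) {δ : ℝ} (hδ : 0 < δ)
    (h : ball q δ ∩ (affineSpan ℝ C : Set (EuclideanSpace ℝ (Fin d))) ⊆ C) :
    q ∈ intrinsicInterior ℝ C := by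
  rw [mem_intrinsicInterior]
  refine ⟨⟨q, hq⟩, ?_, rfl⟩
  apply mem_interior_iff_mem_nhds.2
  have hb : (Subtype.val : affineSpan ℝ C → _) ⁻¹' (ball q δ) ∈
      𝓝 (⟨q, hq⟩ : affineSpan ℝ C) :=
    (isOpen_ball.preimage continuous_subtype_val).mem_nhds (by simpa using hδ)
  refine Filter.mem_of_superset hb ?_
  rintro ⟨x, hxW⟩ hxb
  exact h ⟨hxb, hxW⟩

lemma isClosed_diff_intrinsicInterior {C : Set (EuclideanSpace ℝ (Fin d))} (hC : IsClosed C) :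
    IsClosed (C \ intrinsicInterior ℝ C) := by
  obtain ⟨V, hV, hII⟩ := exists_isOpen_intrinsicInterior C
  have heq : C \ intrinsicInterior ℝ C = C ∩ Vᶜ := by
    ext x
    constructor
    · rintro ⟨hxC, hxI⟩
      exact ⟨hxC, fun hxV => hxI (by rw [hII]; exact ⟨hxV, subset_affineSpan ℝ C hxC⟩)⟩
    · rintro ⟨hxC, hxV⟩
      refine ⟨hxC, fun hxI => hxV ?_⟩
      rw [hII] at hxI
      exact hxI.1
  rw [heq]
  exact hC.inter hV.isClosed_compl

/-- Density of the complement of the closure of a cone over the relative frontier of a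
closed set whose affine span is a hyperplane not containing the apex. -/
lemma dense_compl_closure_cone_hyperplane {C : Set (EuclideanSpace ℝ (Fin d))}
    (hCclosed : IsClosed C) (hCne : C.Nonempty) {x₀ : EuclideanSpace ℝ (Fin d)}
    (hx₀ : x₀ ∉ affineSpan ℝ C)
    (hrank : Module.finrank ℝ (affineSpan ℝ C).direction = d - 1) (hd1 : 1 ≤ d) :
    Dense ((closure (coneSet x₀ (C \ intrinsicInterior ℝ C)))ᶜ) := by
  classical
  set W := affineSpan ℝ C with hWdef
  obtain ⟨z₀, hz₀C⟩ := hCne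
  have hz₀ : z₀ ∈ W := subset_affineSpan ℝ C hz₀C
  have hdim : Module.finrank ℝ ((W.direction)ᗮ : Submodule ℝ (EuclideanSpace ℝ (Fin d))) = 1 := by
    have h1 := Submodule.finrank_add_finrank_orthogonal (K := W.direction)
    rw [hrank, finrank_euclideanSpace_fin] at h1
    omega
  obtain ⟨a, haW, ha0⟩ : ∃ a, a ∈ (W.direction)ᗮ ∧ a ≠ 0 := by
    have hne : ((W.direction)ᗮ : Submodule ℝ (EuclideanSpace ℝ (Fin d))) ≠ ⊥ := by
      intro h
      rw [h, finrank_bot] at hdim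
      omega
    obtain ⟨a, h1, h2⟩ := (Submodule.ne_bot_iff _).1 hne
    exact ⟨a, h1, h2⟩
  have hWlevel : ∀ y : EuclideanSpace ℝ (Fin d), y ∈ W ↔ ⟪a, y - z₀⟫ = 0 := by
    intro y
    constructor
    · intro hy
      have h1 : y -ᵥ z₀ ∈ W.direction := AffineSubspace.vsub_mem_direction hy hz₀
      rw [vsub_eq_sub] at h1
      have := (Submodule.mem_orthogonal _ a).1 haW _ h1
      rwa [real_inner_comm] at this
    · intro hy
      have horth : W.direction = (ℝ ∙ a)ᗮ := by
        apply Submodule.eq_of_le_of_finrank_eq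
        · intro u hu
          rw [Submodule.mem_orthogonal]
          intro v hv
          obtain ⟨c, rfl⟩ := Submodule.mem_span_singleton.1 hv
          have h2 := (Submodule.mem_orthogonal _ a).1 haW _ hu
          rw [real_inner_smul_left]
          rw [real_inner_comm] at h2
          rw [h2, mul_zero]
        · have h3 : Module.finrank ℝ (ℝ ∙ a) = 1 := finrank_span_singleton ha0
          have h2 := Submodule.finrank_add_finrank_orthogonal (K := (ℝ ∙ a))
          rw [h3, finrank_euclideanSpace_fin] at h2
          rw [hrank]
          omega
      have h4 : y - z₀ ∈ W.direction := by
        rw [horth, Submodule.mem_orthogonal]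
        intro v hv
        obtain ⟨c, rfl⟩ := Submodule.mem_span_singleton.1 hv
        rw [real_inner_smul_left, hy, mul_zero]
      have h5 := AffineSubspace.vadd_mem_of_mem_direction h4 hz₀
      rwa [vadd_eq_add, sub_add_cancel] at h5
  set γ : ℝ := ⟪a, z₀ - x₀⟫ with hγdef
  have hγ : γ ≠ 0 := by
    intro h
    apply hx₀
    rw [hWdef] at *
    rw [hWlevel x₀]
    have : x₀ - z₀ = -(z₀ - x₀) := by abel
    rw [this, inner_neg_right, ← hγdef, h, neg_zero]
  have hlevel : ∀ s, s ∈ W → ⟪a, s - x₀⟫ = γ := by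
    intro s hs
    have h1 : s - x₀ = (s - z₀) + (z₀ - x₀) := by abel
    rw [h1, inner_add_right, (hWlevel s).1 hs, zero_add]
  set S := C \ intrinsicInterior ℝ C with hSdef
  have hSsub : ∀ s ∈ S, s ∈ W := fun s hs => subset_affineSpan ℝ C hs.1
  have hSlevel : ∀ s ∈ S, ⟪a, s - x₀⟫ = γ := fun s hs => hlevel s (hSsub s hs)
  have hSclosed : IsClosed S := isClosed_diff_intrinsicInterior hCclosed
  have hslice : ∀ q₀ ∈ W, ∀ δ : ℝ, 0 < δ → ∃ q, q ∈ W ∧ dist q q₀ < δ ∧ q ∉ S := by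
    intro q₀ hq₀ δ hδ
    by_cases hall : ball q₀ δ ∩ (W : Set (EuclideanSpace ℝ (Fin d))) ⊆ C
    · exact ⟨q₀, hq₀, by simpa using hδ,
        fun hS => hS.2 (mem_intrinsicInterior_of_ball_inter hq₀ hδ hall)⟩
    · obtain ⟨q, hq, hqC⟩ := not_subset.1 hall
      exact ⟨q, hq.2, mem_ball.1 hq.1, fun hS => hqC hS.1⟩
  have hcone : closure (coneSet x₀ S) ⊆ coneSet x₀ S ∪ {y | ⟪a, y - x₀⟫ = 0} := by
    intro w hw
    obtain ⟨yseq, hymem, hylim⟩ := mem_closure_iff_seq_limit.1 hw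
    have hex : ∀ n, ∃ t : ℝ, ∃ s, 0 ≤ t ∧ s ∈ S ∧ yseq n = x₀ + t • (s - x₀) := by
      intro n
      obtain ⟨t, ht, s, hs, he⟩ := hymem n
      exact ⟨t, s, ht, hs, he⟩
    choose ts ss hts hss hy using hex
    have htval : ∀ n, ⟪a, yseq n - x₀⟫ = ts n * γ := by
      intro n
      rw [hy n, add_sub_cancel_left, real_inner_smul_right, hSlevel _ (hss n)]
    by_cases hwl : ⟪a, w - x₀⟫ = 0
    · exact Or.inr hwl
    · left
      have hinner : Tendsto (fun n => ⟪a, yseq n - x₀⟫) atTop (𝓝 ⟪a, w - x₀⟫) := by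
        have hcont : Continuous fun y : EuclideanSpace ℝ (Fin d) => ⟪a, y - x₀⟫ :=
          Continuous.inner continuous_const (continuous_id.sub continuous_const)
        exact (hcont.tendsto w).comp hylim
      have httend : Tendsto ts atTop (𝓝 (⟪a, w - x₀⟫ / γ)) := by
        have h1 : Tendsto (fun n => ⟪a, yseq n - x₀⟫ / γ) atTop (𝓝 (⟪a, w - x₀⟫ / γ)) :=
          hinner.div_const γ
        exact h1.congr (fun n => by rw [htval n, mul_div_cancel_right₀ _ hγ])
      set t := ⟪a, w - x₀⟫ / γ with htdef
      have ht0 : 0 ≤ t := ge_of_tendsto httend (Eventually.of_forall hts)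
      have htpos : 0 < t := ht0.lt_of_ne (fun h => hwl (by
        have := h.symm
        rw [htdef, div_eq_zero_iff] at this
        tauto))
      have hevpos : ∀ᶠ n in atTop, 0 < ts n := httend.eventually (eventually_gt_nhds htpos)
      have h1 : ∀ᶠ n in atTop, ss n = x₀ + (ts n)⁻¹ • (yseq n - x₀) := by
        filter_upwards [hevpos] with n hn
        rw [hy n, add_sub_cancel_left, smul_smul, inv_mul_cancel₀ hn.ne', one_smul,
          add_sub_cancel]
      have h2 : Tendsto (fun n => x₀ + (ts n)⁻¹ • (yseq n - x₀)) atTop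
          (𝓝 (x₀ + t⁻¹ • (w - x₀))) :=
        tendsto_const_nhds.add ((httend.inv₀ htpos.ne').smul
          (hylim.sub tendsto_const_nhds))
      have hs_lim : Tendsto ss atTop (𝓝 (x₀ + t⁻¹ • (w - x₀))) :=
        h2.congr' (h1.mono fun n hn => hn.symm)
      have hsS : x₀ + t⁻¹ • (w - x₀) ∈ S :=
        hSclosed.mem_of_tendsto hs_lim (Eventually.of_forall hss)
      refine ⟨t, ht0, _, hsS, ?_⟩
      rw [add_sub_cancel_left, smul_smul, mul_inv_cancel₀ htpos.ne', one_smul,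
        add_sub_cancel]
  rw [dense_iff_inter_open]
  intro U hU hUne
  obtain ⟨w, hwU⟩ := hUne
  obtain ⟨ε, hε, hball⟩ := Metric.isOpen_iff.1 hU w hwU
  suffices hfind : ∃ y, y ∈ ball w ε ∧ ⟪a, y - x₀⟫ ≠ 0 ∧ y ∉ coneSet x₀ S by
    obtain ⟨y, h1, h2, h3⟩ := hfind
    refine ⟨y, hball h1, fun hy => ?_⟩
    rcases hcone hy with h | h
    · exact h3 h
    · exact h2 h
  set ρ : ℝ := ⟪a, w - x₀⟫ / γ with hρdef
  have hργ : ⟪a, w - x₀⟫ = ρ * γ := by rw [hρdef, div_mul_cancel₀ _ hγ]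
  by_cases hρpos : 0 < ρ
  · have hqwW : x₀ + ρ⁻¹ • (w - x₀) ∈ W := by
      rw [hWlevel]
      have : x₀ + ρ⁻¹ • (w - x₀) - z₀ = ρ⁻¹ • (w - x₀) - (z₀ - x₀) := by module
      rw [this, inner_sub_right, real_inner_smul_right, hργ, ← hγdef]
      field_simp
      ring
    set qw : EuclideanSpace ℝ (Fin d) := x₀ + ρ⁻¹ • (w - x₀) with hqwdef
    have hwrep : w = x₀ + ρ • (qw - x₀) := by
      rw [hqwdef, add_sub_cancel_left, smul_smul, mul_inv_cancel₀ hρpos.ne', one_smul,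
        add_sub_cancel]
    obtain ⟨q, hqW, hqd, hqS⟩ := hslice _ hqwW (ε / ρ / 2) (by positivity)
    refine ⟨x₀ + ρ • (q - x₀), ?_, ?_, ?_⟩
    · rw [mem_ball, dist_eq_norm]
      calc ‖x₀ + ρ • (q - x₀) - w‖
          = ‖ρ • (q - qw)‖ := by
            rw [hwrep]
            congr 1
            module
        _ = ρ * ‖q - qw‖ := by
            rw [norm_smul, Real.norm_eq_abs, abs_of_pos hρpos]
        _ < ρ * (ε / ρ / 2) := by
            apply mul_lt_mul_of_pos_left _ hρpos
            rw [← dist_eq_norm]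
            exact hqd
        _ < ε := by
            have hc : ρ * (ε / ρ / 2) = ε / 2 := by
              rw [div_right_comm, mul_comm, div_mul_cancel₀ _ hρpos.ne']
            rw [hc]
            linarith
    · rw [add_sub_cancel_left, real_inner_smul_right, hlevel q hqW]
      exact mul_ne_zero hρpos.ne' hγ
    · rintro ⟨t, ht0, s, hsS, heq⟩
      have h1 : ⟪a, x₀ + ρ • (q - x₀) - x₀⟫ = ρ * γ := by
        rw [add_sub_cancel_left, real_inner_smul_right, hlevel q hqW]
      have h2 : ⟪a, x₀ + t • (s - x₀) - x₀⟫ = t * γ := by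
        rw [add_sub_cancel_left, real_inner_smul_right, hSlevel s hsS]
      rw [heq, h2] at h1
      have htρ : t = ρ := mul_right_cancel₀ hγ h1
      rw [htρ] at heq
      have h5 : ρ • (q - x₀) = ρ • (s - x₀) := add_left_cancel heq
      have h6 : q = s := by
        have := smul_right_injective (EuclideanSpace ℝ (Fin d)) hρpos.ne' h5
        exact sub_left_inj.1 this
      exact hqS (h6 ▸ hsS)
  · push_neg at hρpos
    have han : (0:ℝ) < ‖a‖ := norm_pos_iff.2 ha0
    set η : ℝ := ε / (2 * (‖a‖ * |γ| + 1)) with hηdef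
    have hη : 0 < η := by positivity
    refine ⟨w - (η * γ) • a, ?_, ?_, ?_⟩
    · rw [mem_ball, dist_eq_norm]
      have : w - (η * γ) • a - w = -((η * γ) • a) := by module
      rw [this, norm_neg, norm_smul, Real.norm_eq_abs, abs_mul, abs_of_pos hη]
      have h1 : η * (‖a‖ * |γ| + 1) = ε / 2 := by
        rw [hηdef]; field_simp
      nlinarith [abs_nonneg γ, han]
    · have hval : ⟪a, w - (η * γ) • a - x₀⟫ = γ * (ρ - η * ‖a‖ ^ 2) := by
        have : w - (η * γ) • a - x₀ = (w - x₀) - (η * γ) • a := by module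
        rw [this, inner_sub_right, real_inner_smul_right, real_inner_self_eq_norm_sq, hργ]
        ring
      rw [hval]
      apply mul_ne_zero hγ
      have : 0 < η * ‖a‖ ^ 2 := by positivity
      intro h
      nlinarith
    · rintro ⟨t, ht0, s, hsS, heq⟩
      have h2 : ⟪a, x₀ + t • (s - x₀) - x₀⟫ = t * γ := by
        rw [add_sub_cancel_left, real_inner_smul_right, hSlevel s hsS]
      have hval : ⟪a, w - (η * γ) • a - x₀⟫ = γ * (ρ - η * ‖a‖ ^ 2) := by
        have : w - (η * γ) • a - x₀ = (w - x₀) - (η * γ) • a := by module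
        rw [this, inner_sub_right, real_inner_smul_right, real_inner_self_eq_norm_sq, hργ]
        ring
      rw [heq, h2] at hval
      have h3 : γ * t = γ * (ρ - η * ‖a‖ ^ 2) := by rw [mul_comm γ t]; exact hval
      have ht : t = ρ - η * ‖a‖ ^ 2 := mul_left_cancel₀ hγ h3
      have hpos : 0 < η * ‖a‖ ^ 2 := by positivity
      linarith

end

section Partition

variable {d K : ℕ} {R : Fin K → Set (EuclideanSpace ℝ (Fin d))}

lemma IsConvexPolyhedron.isClosed {S : Set (EuclideanSpace ℝ (Fin d))}
    (h : IsConvexPolyhedron S) : IsClosed S := by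
  obtain ⟨-, m, a, c, rfl⟩ := h
  have heq : {x : EuclideanSpace ℝ (Fin d) | ∀ i, ⟪a i, x⟫ ≤ c i} =
      ⋂ i, {x | ⟪a i, x⟫ ≤ c i} := by
    ext x; simp
  rw [heq]
  exact isClosed_iInter fun i =>
    isClosed_le (Continuous.inner continuous_const continuous_id) continuous_const

lemma IsConvexPolyhedron.convex {S : Set (EuclideanSpace ℝ (Fin d))}
    (h : IsConvexPolyhedron S) : Convex ℝ S := by
  obtain ⟨-, m, a, c, rfl⟩ := h
  intro x hx y hy α β hα hβ hαβ
  intro i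
  have hx' := hx i
  have hy' := hy i
  simp only [Set.mem_setOf_eq] at *
  rw [inner_add_right, real_inner_smul_right, real_inner_smul_right]
  calc α * ⟪a i, x⟫ + β * ⟪a i, y⟫ ≤ α * c i + β * c i :=
        add_le_add (mul_le_mul_of_nonneg_left hx' hα) (mul_le_mul_of_nonneg_left hy' hβ)
    _ = c i := by rw [← add_mul, hαβ, one_mul]

lemma not_mem_of_mem_interior (hpart : IsPolyhedralPartition R) {k l : Fin K} (hkl : l ≠ k)
    {x₀ : EuclideanSpace ℝ (Fin d)} (hx₀ : x₀ ∈ interior (R k)) : x₀ ∉ R l := by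
  intro hx₀l
  obtain ⟨q, hq⟩ := hpart.2.2.1 l
  have hconv : Convex ℝ (R l) := (hpart.1 l).convex
  obtain ⟨ε, hε, hball⟩ := Metric.isOpen_iff.1 isOpen_interior x₀ hx₀
  set δ : ℝ := min (1/2) (ε / (2 * (‖x₀ - q‖ + 1))) with hδdef
  have hδpos : 0 < δ := by
    apply lt_min (by norm_num)
    positivity
  have hδhalf : δ ≤ 1/2 := min_le_left _ _
  have hδε : δ * (‖x₀ - q‖ + 1) ≤ ε / 2 := by
    have h1 : δ ≤ ε / (2 * (‖x₀ - q‖ + 1)) := min_le_right _ _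
    have h2 : (0:ℝ) < ‖x₀ - q‖ + 1 := by positivity
    have h3 := mul_le_mul_of_nonneg_right h1 h2.le
    have h4 : ε / (2 * (‖x₀ - q‖ + 1)) * (‖x₀ - q‖ + 1) = ε / 2 := by
      field_simp
    linarith
  set z := q + (1 - δ) • (x₀ - q) with hzdef
  have hzint : z ∈ interior (R l) := by
    have hsub := hconv.openSegment_interior_closure_subset_interior hq (subset_closure hx₀l)
    apply hsub
    rw [openSegment_eq_image']
    exact ⟨1 - δ, ⟨by linarith, by linarith⟩, rfl⟩
  have hzball : z ∈ ball x₀ ε := by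
    rw [mem_ball, dist_eq_norm]
    have : z - x₀ = -(δ • (x₀ - q)) := by rw [hzdef]; module
    rw [this, norm_neg, norm_smul, Real.norm_eq_abs, abs_of_pos hδpos]
    have h3 : δ * ‖x₀ - q‖ ≤ δ * (‖x₀ - q‖ + 1) := by nlinarith [hδpos.le]
    linarith
  have : z ∈ interior (R k) ∩ interior (R l) := ⟨hball hzball, hzint⟩
  rw [hpart.2.2.2 k l (fun h => hkl h.symm)] at this
  exact this

lemma bad_mem_pair (hpart : IsPolyhedralPartition R) {z : EuclideanSpace ℝ (Fin d)}
    (hz : ∀ k, z ∉ interior (R k)) : ∃ k l, k ≠ l ∧ z ∈ R k ∧ z ∈ R l := by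
  have hcover := hpart.2.1
  have hzmem : z ∈ ⋃ k, R k := by rw [hcover]; trivial
  obtain ⟨k, hk⟩ := Set.mem_iUnion.1 hzmem
  by_contra hno
  push_neg at hno
  have hnot : ∀ l, l ≠ k → z ∉ R l := fun l hl hzl => hno k l (fun h => hl h.symm) hk hzl
  apply hz k
  rw [mem_interior_iff_mem_nhds]
  have hUopen : IsOpen (⋂ l ∈ {l : Fin K | l ≠ k}, (R l)ᶜ) :=
    (Set.finite_univ.subset (Set.subset_univ _)).isOpen_biInter
      (fun l _ => (hpart.1 l).isClosed.isOpen_compl)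
  have hUmem : z ∈ ⋂ l ∈ {l : Fin K | l ≠ k}, (R l)ᶜ :=
    Set.mem_iInter₂.2 fun l hl => hnot l hl
  refine Filter.mem_of_superset (hUopen.mem_nhds hUmem) ?_
  intro u hu
  have hucov : u ∈ ⋃ m, R m := by rw [hcover]; trivial
  obtain ⟨m, hm⟩ := Set.mem_iUnion.1 hucov
  by_cases hmk : m = k
  · exact hmk ▸ hm
  · exact absurd hm (Set.mem_iInter₂.1 hu m hmk)

lemma span_ne_top_of_neighboring (hpart : IsPolyhedralPartition R) {k l : Fin K}
    (h : Neighboring R k l) : affineSpan ℝ (R k ∩ R l) ≠ ⊤ := by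
  obtain ⟨hkl, hne, hrank⟩ := h
  intro htop
  rcases Nat.eq_zero_or_pos d with hd0 | hd1
  · subst hd0
    obtain ⟨p, hp⟩ := hpart.2.2.1 k
    obtain ⟨q, hq⟩ := hpart.2.2.1 l
    have hpq : p = q := Subsingleton.elim p q
    have : p ∈ interior (R k) ∩ interior (R l) := ⟨hp, hpq ▸ hq⟩
    rw [hpart.2.2.2 k l hkl] at this
    exact this
  · have hfr : Module.finrank ℝ (affineSpan ℝ (R k ∩ R l)).direction = d := by
      rw [htop]
      rw [AffineSubspace.direction_top]
      rw [finrank_top, finrank_euclideanSpace_fin]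
    omega

lemma frontierBetween_subset_frontierPoints {k l : Fin K} (h : Neighboring R k l) :
    frontierBetween R k l ⊆ frontierPoints R := fun z hz =>
  Set.mem_iUnion.2 ⟨k, Set.mem_iUnion.2 ⟨l, Set.mem_iUnion.2 ⟨h, hz⟩⟩⟩

lemma dense_compl_pair (hpart : IsPolyhedralPartition R) {k l : Fin K} (hkl : k ≠ l)
    (x₀ : EuclideanSpace ℝ (Fin d)) :
    Dense ((closure (coneSet x₀ ((R k ∩ R l) \ frontierPoints R)))ᶜ) := by
  classical
  rcases Set.eq_empty_or_nonempty (R k ∩ R l) with hCe | hCne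
  · have h1 : (R k ∩ R l) \ frontierPoints R = ∅ := by rw [hCe]; exact Set.empty_diff _
    have h2 : coneSet x₀ (∅ : Set (EuclideanSpace ℝ (Fin d))) = ∅ := by
      ext y; simp [coneSet]
    rw [h1, h2, closure_empty, compl_empty]
    exact dense_univ
  have hCconv : Convex ℝ (R k ∩ R l) := ((hpart.1 k).convex.inter (hpart.1 l).convex)
  have hCclosed : IsClosed (R k ∩ R l) := ((hpart.1 k).isClosed.inter (hpart.1 l).isClosed)
  by_cases hbig : affineSpan ℝ (insert x₀ (R k ∩ R l)) = ⊤
  · have hWne : affineSpan ℝ (R k ∩ R l) ≠ ⊤ := by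
      intro h
      obtain ⟨x, hx⟩ := (hCconv.interior_nonempty_iff_affineSpan_eq_top).2 h
      have h1 : x ∈ interior (R k) := interior_mono Set.inter_subset_left hx
      have h2 : x ∈ interior (R l) := interior_mono Set.inter_subset_right hx
      have : x ∈ interior (R k) ∩ interior (R l) := ⟨h1, h2⟩
      rw [hpart.2.2.2 k l hkl] at this
      exact this
    have hx₀W : x₀ ∉ affineSpan ℝ (R k ∩ R l) := by
      intro h
      apply hWne
      have hle : affineSpan ℝ (insert x₀ (R k ∩ R l)) ≤ affineSpan ℝ (R k ∩ R l) :=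
        affineSpan_le.2 (Set.insert_subset h (subset_affineSpan ℝ _))
      rw [hbig] at hle
      exact top_unique hle
    obtain ⟨z₀, hz₀⟩ := id hCne
    have hup : Module.finrank ℝ (affineSpan ℝ (R k ∩ R l)).direction < d := by
      by_contra hle
      push_neg at hle
      have hle2 : Module.finrank ℝ (affineSpan ℝ (R k ∩ R l)).direction ≤ d := by
        have := Submodule.finrank_le (affineSpan ℝ (R k ∩ R l)).direction
        rwa [finrank_euclideanSpace_fin] at this
      have hfull : (affineSpan ℝ (R k ∩ R l)).direction = ⊤ := by
        apply Submodule.eq_top_of_finrank_eq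
        rw [finrank_euclideanSpace_fin]
        omega
      apply hWne
      exact (AffineSubspace.direction_eq_top_iff_of_nonempty
        ⟨z₀, subset_affineSpan ℝ _ hz₀⟩).1 hfull
    have hlow : d ≤ Module.finrank ℝ (affineSpan ℝ (R k ∩ R l)).direction + 1 := by
      have h1 : (affineSpan ℝ (insert x₀ (R k ∩ R l))).direction = ⊤ := by
        rw [hbig]
        exact AffineSubspace.direction_top ℝ _ _
      have h2 : Module.finrank ℝ (affineSpan ℝ (insert x₀ (R k ∩ R l))).direction = d := by
        rw [h1, finrank_top, finrank_euclideanSpace_fin]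
      have h3 : (affineSpan ℝ (insert x₀ (R k ∩ R l))).direction ≤
          (affineSpan ℝ (R k ∩ R l)).direction ⊔ (ℝ ∙ (z₀ - x₀)) := by
        rw [direction_affineSpan, vectorSpan_eq_span_vsub_set_right ℝ
          (Set.mem_insert x₀ (R k ∩ R l))]
        apply Submodule.span_le.2
        rintro v ⟨u, hu, rfl⟩
        rcases Set.mem_insert_iff.1 hu with rfl | huC
        · simp only [vsub_eq_sub, sub_self, SetLike.mem_coe]
          exact Submodule.zero_mem _
        · have hd1 : u - z₀ ∈ (affineSpan ℝ (R k ∩ R l)).direction :=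
            AffineSubspace.vsub_mem_direction (subset_affineSpan ℝ _ huC)
              (subset_affineSpan ℝ _ hz₀)
          have heq : u -ᵥ x₀ = (u - z₀) + (z₀ - x₀) := by rw [vsub_eq_sub]; abel
          simp only [SetLike.mem_coe]
          show u -ᵥ x₀ ∈ _
          rw [heq]
          exact Submodule.add_mem _ (Submodule.mem_sup_left hd1)
            (Submodule.mem_sup_right (Submodule.mem_span_singleton_self _))
      have h4 := Submodule.finrank_mono h3
      have h5 := Submodule.finrank_add_le_finrank_add_finrank
        ((affineSpan ℝ (R k ∩ R l)).direction) (ℝ ∙ (z₀ - x₀))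
      have h6 : Module.finrank ℝ (ℝ ∙ (z₀ - x₀)) ≤ 1 := by
        by_cases hz : z₀ - x₀ = 0
        · rw [hz, Submodule.span_zero_singleton, finrank_bot]
          norm_num
        · rw [finrank_span_singleton hz]
      rw [h2] at h4
      omega
    have hrank : Module.finrank ℝ (affineSpan ℝ (R k ∩ R l)).direction = d - 1 := by omega
    have hd1 : 1 ≤ d := by omega
    have hnb : Neighboring R k l := ⟨hkl, hCne, hrank⟩
    have hsub : (R k ∩ R l) \ frontierPoints R ⊆
        (R k ∩ R l) \ intrinsicInterior ℝ (R k ∩ R l) := by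
      intro z hz
      refine ⟨hz.1, fun hzI => hz.2 ?_⟩
      exact frontierBetween_subset_frontierPoints hnb hzI
    have hdense := dense_compl_closure_cone_hyperplane hCclosed hCne hx₀W hrank hd1
    apply hdense.mono
    apply compl_subset_compl.2
    apply closure_mono
    rintro y ⟨t, ht, s, hs, he⟩
    exact ⟨t, ht, s, hsub hs, he⟩
  · have hsub : coneSet x₀ ((R k ∩ R l) \ frontierPoints R) ⊆
        (affineSpan ℝ (insert x₀ (R k ∩ R l)) : Set (EuclideanSpace ℝ (Fin d))) := by
      rintro y ⟨t, ht, s, hs, rfl⟩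
      have hx₀m : x₀ ∈ affineSpan ℝ (insert x₀ (R k ∩ R l)) :=
        subset_affineSpan ℝ _ (Set.mem_insert _ _)
      have hsm : s ∈ affineSpan ℝ (insert x₀ (R k ∩ R l)) :=
        subset_affineSpan ℝ _ (Set.mem_insert_of_mem _ hs.1)
      have hmem := AffineMap.lineMap_mem t hx₀m hsm
      have heq : (AffineMap.lineMap x₀ s : ℝ →ᵃ[ℝ] _) t = x₀ + t • (s - x₀) := by
        rw [AffineMap.lineMap_apply_module']
        abel
      rwa [heq] at hmem
    have hclosed : IsClosed (affineSpan ℝ (insert x₀ (R k ∩ R l)) :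
        Set (EuclideanSpace ℝ (Fin d))) :=
      (affineSpan ℝ (insert x₀ (R k ∩ R l))).closed_of_finiteDimensional
    have h2 := closure_minimal hsub hclosed
    exact (dense_compl_affineSubspace _ hbig).mono (compl_subset_compl.2 h2)

end Partition

lemma local_convexity_at_frontier {d K : ℕ} {R : Fin K → Set (EuclideanSpace ℝ (Fin d))}
    {f : EuclideanSpace ℝ (Fin d) → ℝ}
    (hpart : IsPolyhedralPartition R) (hcont : Continuous f)
    (hloc : ∀ x ∈ frontierPoints R, ∃ N ∈ nhds x,
      ∀ x₁ ∈ N \ frontierPoints R, ∀ x₂ ∈ N \ frontierPoints R,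
        DifferentiableAt ℝ f x₁ ∧ DifferentiableAt ℝ f x₂ ∧
        0 ≤ ⟪gradient f x₁ - gradient f x₂, x₁ - x₂⟫) :
    ∀ z ∈ frontierPoints R, ∃ r > 0, ConvexOn ℝ (ball z r) f := by
  classical
  intro z hz
  obtain ⟨N, hN, hprop⟩ := hloc z hz
  obtain ⟨r, hr, hball⟩ := Metric.mem_nhds_iff.1 hN
  refine ⟨r, hr, ?_⟩
  set A : Fin K × Fin K → Set (EuclideanSpace ℝ (Fin d)) := fun p =>
    if Neighboring R p.1 p.2 then (affineSpan ℝ (R p.1 ∩ R p.2) : Set (EuclideanSpace ℝ (Fin d)))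
    else ∅ with hAdef
  have hAopen : ∀ p, IsOpen (A p)ᶜ := by
    intro p
    rw [hAdef]
    dsimp only
    split_ifs with h
    · exact (affineSpan ℝ _).closed_of_finiteDimensional.isOpen_compl
    · rw [compl_empty]; exact isOpen_univ
  have hAdense : ∀ p, Dense (A p)ᶜ := by
    intro p
    rw [hAdef]
    dsimp only
    split_ifs with h
    · exact dense_compl_affineSubspace _ (span_ne_top_of_neighboring hpart h)
    · rw [compl_empty]; exact dense_univ
  have hFA : frontierPoints R ⊆ ⋃ p : Fin K × Fin K, A p := by
    intro x hx
    simp only [frontierPoints, Set.mem_iUnion] at hx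
    obtain ⟨k, l, hnb, hxf⟩ := hx
    refine Set.mem_iUnion.2 ⟨(k, l), ?_⟩
    rw [hAdef]
    dsimp only
    rw [if_pos hnb]
    exact subset_affineSpan ℝ _ (intrinsicInterior_subset hxf)
  have hG : Dense (⋂ p, (A p)ᶜ) := dense_iInter_of_isOpen hAopen hAdense
  have key : ∀ y₁ ∈ ball z r ∩ ⋂ p, (A p)ᶜ, ∀ y₂ ∈ ball z r ∩ ⋂ p, (A p)ᶜ,
      ∀ α β : ℝ, 0 ≤ α → 0 ≤ β → α + β = 1 → f (α • y₁ + β • y₂) ≤ α * f y₁ + β * f y₂ := by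
    intro y₁ hy₁ y₂ hy₂ α β hα hβ hαβ
    by_cases hyy : y₁ = y₂
    · subst hyy
      have hc : α • y₁ + β • y₁ = y₁ := by rw [← add_smul, hαβ, one_smul]
      rw [hc]
      exact le_of_eq (by rw [← add_mul, hαβ, one_mul])
    set v := y₂ - y₁ with hv
    set ℓ : ℝ → EuclideanSpace ℝ (Fin d) := fun t => y₁ + t • v with hℓ
    have hℓcont : Continuous ℓ := continuous_const.add (continuous_id.smul continuous_const)
    have hcomb : ∀ t : ℝ, ℓ t = (1 - t) • y₁ + t • y₂ := by
      intro t; rw [hℓ]; dsimp only; rw [hv]; module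
    set T : Set ℝ := {t : ℝ | ∃ p, ℓ t ∈ A p} with hTdef
    have hTfin : T.Finite := by
      have hTeq : T = ⋃ p, {t : ℝ | ℓ t ∈ A p} := by ext t; simp [hTdef]
      rw [hTeq]
      apply Set.finite_iUnion
      intro p
      apply Set.Subsingleton.finite
      intro t₁ h₁ t₂ h₂
      by_contra ht12
      simp only [Set.mem_setOf_eq, hAdef] at h₁ h₂
      by_cases hnb : Neighboring R p.1 p.2
      · rw [if_pos hnb] at h₁ h₂
        set W := affineSpan ℝ (R p.1 ∩ R p.2) with hW
        have hvdir : v ∈ W.direction := by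
          have hsub : ℓ t₁ -ᵥ ℓ t₂ ∈ W.direction := AffineSubspace.vsub_mem_direction h₁ h₂
          rw [vsub_eq_sub] at hsub
          have hde : ℓ t₁ - ℓ t₂ = (t₁ - t₂) • v := by rw [hℓ]; dsimp only; module
          rw [hde] at hsub
          have hsm := W.direction.smul_mem (t₁ - t₂)⁻¹ hsub
          rwa [smul_smul, inv_mul_cancel₀ (sub_ne_zero.2 ht12), one_smul] at hsm
        have hy₁W : y₁ ∈ W := by
          have hmem := AffineSubspace.vadd_mem_of_mem_direction
            (W.direction.smul_mem (-t₁) hvdir) h₁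
          have heq : (-t₁) • v +ᵥ ℓ t₁ = y₁ := by
            rw [vadd_eq_add, hℓ]; dsimp only; module
          rwa [heq] at hmem
        have hcontra := Set.mem_iInter.1 hy₁.2 p
        apply hcontra
        rw [hAdef]
        dsimp only
        rw [if_pos hnb]
        exact hy₁W
      · rw [if_neg hnb] at h₁
        exact h₁
    have hmem : ∀ t ∈ Icc (0:ℝ) 1, ℓ t ∈ ball z r := by
      intro t ht
      rw [hcomb t]
      exact (convex_ball z r) hy₁.1 hy₂.1 (by linarith [ht.2]) ht.1 (by ring)
    have hgood : ∀ t ∈ Icc (0:ℝ) 1, t ∉ T → ℓ t ∈ N \ frontierPoints R := by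
      intro t ht hT
      refine ⟨hball (hmem t ht), fun hF => hT ?_⟩
      obtain ⟨p, hp⟩ := Set.mem_iUnion.1 (hFA hF)
      exact ⟨p, hp⟩
    set g' : ℝ → ℝ := fun t => ⟪gradient f (ℓ t), v⟫ with hg'
    have hd : ∀ t ∈ Ioo (0:ℝ) 1 \ T, HasDerivAt (f ∘ ℓ) (g' t) t := by
      intro t ht
      have hgt := hgood t (Ioo_subset_Icc_self ht.1) ht.2
      have hdiff : DifferentiableAt ℝ f (ℓ t) := (hprop _ hgt _ hgt).1
      have hfd : HasFDerivAt f (InnerProductSpace.toDual ℝ _ (gradient f (ℓ t))) (ℓ t) :=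
        hdiff.hasGradientAt.hasFDerivAt
      have hlder : HasDerivAt ℓ v t := by
        have h1 : HasDerivAt (fun s : ℝ => s • v) ((1:ℝ) • v) t :=
          (hasDerivAt_id t).smul_const v
        rw [one_smul] at h1
        exact h1.const_add y₁
      have hcd := hfd.comp_hasDerivAt t hlder
      have : (InnerProductSpace.toDual ℝ (EuclideanSpace ℝ (Fin d)) (gradient f (ℓ t))) v
          = g' t := by
        rw [hg']
        exact InnerProductSpace.toDual_apply_apply
      rwa [this] at hcd
    have hmono : ∀ s t, s ∈ Ioo (0:ℝ) 1 \ T → t ∈ Ioo (0:ℝ) 1 \ T → s ≤ t → g' s ≤ g' t := by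
      intro s t hs ht hst
      rcases eq_or_lt_of_le hst with rfl | hlt
      · exact le_rfl
      have hgs := hgood s (Ioo_subset_Icc_self hs.1) hs.2
      have hgt := hgood t (Ioo_subset_Icc_self ht.1) ht.2
      have h0 := (hprop _ hgt _ hgs).2.2
      have hsub : ℓ t - ℓ s = (t - s) • v := by rw [hℓ]; dsimp only; module
      rw [hsub, real_inner_smul_right, inner_sub_left] at h0
      nlinarith [h0, sub_pos.2 hlt]
    have hcvx : ConvexOn ℝ (Icc (0:ℝ) 1) (f ∘ ℓ) :=
      convexOn_Icc_of_derivAt hTfin (hcont.comp hℓcont).continuousOn hd hmono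
    have h01 : (0:ℝ) ∈ Icc (0:ℝ) 1 := ⟨le_rfl, zero_le_one⟩
    have h11 : (1:ℝ) ∈ Icc (0:ℝ) 1 := ⟨zero_le_one, le_rfl⟩
    have hfin := hcvx.2 h01 h11 hα hβ hαβ
    simp only [Function.comp_apply, smul_eq_mul, mul_zero, mul_one, zero_add] at hfin
    have hβcomb : ℓ β = α • y₁ + β • y₂ := by
      rw [hcomb β, show (1:ℝ) - β = α by linarith]
    have hl0 : ℓ 0 = y₁ := by rw [hℓ]; dsimp only; rw [zero_smul, add_zero]
    have hl1 : ℓ 1 = y₂ := by rw [hℓ]; dsimp only; rw [one_smul, hv, add_sub_cancel]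
    rwa [hβcomb, hl0, hl1] at hfin
  refine ⟨convex_ball z r, ?_⟩
  intro y₁ hy₁ y₂ hy₂ α β hα hβ hαβ
  have happrox : ∀ w : EuclideanSpace ℝ (Fin d), w ∈ ball z r → ∀ n : ℕ,
      ∃ w', (w' ∈ ball z r ∩ ⋂ p, (A p)ᶜ) ∧ dist w' w < 1/(n+1) := by
    intro w hw n
    have hρ : (0:ℝ) < min (1/((n:ℝ)+1)) (r - dist w z) := by
      apply lt_min (by positivity)
      rw [mem_ball] at hw
      linarith
    obtain ⟨w', hw'G, hw'b⟩ := hG.exists_mem_open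
      (isOpen_ball : IsOpen (ball w (min (1/((n:ℝ)+1)) (r - dist w z))))
      (nonempty_ball.2 hρ)
    refine ⟨w', ⟨?_, hw'G⟩, lt_of_lt_of_le (mem_ball.1 hw'b) (min_le_left _ _)⟩
    rw [mem_ball]
    have h1 : dist w' w < r - dist w z :=
      lt_of_lt_of_le (mem_ball.1 hw'b) (min_le_right _ _)
    calc dist w' z ≤ dist w' w + dist w z := dist_triangle _ _ _
      _ < r := by linarith
  choose s₁ hs₁ hd₁ using happrox y₁ hy₁
  choose s₂ hs₂ hd₂ using happrox y₂ hy₂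
  have hlim₁ : Filter.Tendsto s₁ Filter.atTop (nhds y₁) := by
    rw [tendsto_iff_dist_tendsto_zero]
    exact squeeze_zero (fun n => dist_nonneg) (fun n => (hd₁ n).le)
      tendsto_one_div_add_atTop_nhds_zero_nat
  have hlim₂ : Filter.Tendsto s₂ Filter.atTop (nhds y₂) := by
    rw [tendsto_iff_dist_tendsto_zero]
    exact squeeze_zero (fun n => dist_nonneg) (fun n => (hd₂ n).le)
      tendsto_one_div_add_atTop_nhds_zero_nat
  have hineq : ∀ n, f (α • s₁ n + β • s₂ n) ≤ α * f (s₁ n) + β * f (s₂ n) :=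
    fun n => key _ (hs₁ n) _ (hs₂ n) α β hα hβ hαβ
  have hL : Filter.Tendsto (fun n => f (α • s₁ n + β • s₂ n)) Filter.atTop
      (nhds (f (α • y₁ + β • y₂))) :=
    (hcont.tendsto _).comp ((hlim₁.const_smul α).add (hlim₂.const_smul β))
  have hR : Filter.Tendsto (fun n => α * f (s₁ n) + β * f (s₂ n)) Filter.atTop
      (nhds (α * f y₁ + β * f y₂)) :=
    (((hcont.tendsto _).comp hlim₁).const_mul α).add
      (((hcont.tendsto _).comp hlim₂).const_mul β)
  have hgoal := le_of_tendsto_of_tendsto' hL hR hineq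
  simpa [smul_eq_mul] using hgoal

lemma affine_convexOn (c₁ c₂ : ℝ) {s : Set ℝ} (hs : Convex ℝ s) :
    ConvexOn ℝ s (fun τ => c₁ * τ + c₂) := by
  refine ⟨hs, ?_⟩
  intro p _ q _ α β hα hβ hαβ
  simp only [smul_eq_mul]
  have heq : c₁ * (α * p + β * q) + c₂ = α * (c₁ * p + c₂) + β * (c₁ * q + c₂) := by
    linear_combination (-c₂) * hαβ
  exact le_of_eq heq

/-- Local characterization (sufficiency): if a CPWL function `f` with compatible
polyhedral partition `(R k)` satisfies that every frontier point `x ∈ 𝓕` has a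
neighborhood `𝒩` such that for all `x₁, x₂ ∈ 𝒩 \ 𝓕`, `f` is differentiable at `x₁`
and `x₂` and `⟪∇f(x₁) - ∇f(x₂), x₁ - x₂⟫ ≥ 0`, then `f` is convex on `ℝ^d`. -/
theorem convex_cpwl_of_local_monotonicity {d K : ℕ}
    (R : Fin K → Set (EuclideanSpace ℝ (Fin d)))
    (f : EuclideanSpace ℝ (Fin d) → ℝ)
    (hpart : IsPolyhedralPartition R)
    (hcont : Continuous f)
    (haff : ∀ k, ∃ (u : EuclideanSpace ℝ (Fin d)) (b : ℝ), ∀ x ∈ R k, f x = ⟪u, x⟫ + b)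
    (hloc : ∀ x ∈ frontierPoints R, ∃ N ∈ nhds x,
      ∀ x₁ ∈ N \ frontierPoints R, ∀ x₂ ∈ N \ frontierPoints R,
        DifferentiableAt ℝ f x₁ ∧ DifferentiableAt ℝ f x₂ ∧
        0 ≤ ⟪gradient f x₁ - gradient f x₂, x₁ - x₂⟫) :
    ConvexOn ℝ Set.univ f := by
  classical
  obtain ⟨hpoly, hcover, hint, hdisj⟩ := hpart
  have hpart' : IsPolyhedralPartition R := ⟨hpoly, hcover, hint, hdisj⟩
  choose u bb haff' using haff
  have hlocal := local_convexity_at_frontier hpart' hcont hloc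
  suffices hA : ∀ (k : Fin K) (y : EuclideanSpace ℝ (Fin d)), ⟪u k, y⟫ + bb k ≤ f y by
    refine ⟨convex_univ, ?_⟩
    intro x _ y _ α β hα hβ hαβ
    have hx : α • x + β • y ∈ ⋃ k, R k := by rw [hcover]; trivial
    obtain ⟨k, hk⟩ := Set.mem_iUnion.1 hx
    have heq : f (α • x + β • y) = α * (⟪u k, x⟫ + bb k) + β * (⟪u k, y⟫ + bb k) := by
      rw [haff' k _ hk, inner_add_right, real_inner_smul_right, real_inner_smul_right]
      linear_combination (-(bb k)) * hαβ
    rw [heq]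
    simp only [smul_eq_mul]
    exact add_le_add (mul_le_mul_of_nonneg_left (hA k x) hα)
      (mul_le_mul_of_nonneg_left (hA k y) hβ)
  intro k y₀
  obtain ⟨x₀, hx₀⟩ := hint k
  set O : Fin K × Fin K → Set (EuclideanSpace ℝ (Fin d)) := fun p =>
    if p.1 = p.2 then Set.univ
    else (closure (coneSet x₀ ((R p.1 ∩ R p.2) \ frontierPoints R)))ᶜ with hOdef
  have hOopen : ∀ p, IsOpen (O p) := by
    intro p; rw [hOdef]; dsimp only; split_ifs with h
    · exact isOpen_univ
    · exact isClosed_closure.isOpen_compl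
  have hOdense : ∀ p, Dense (O p) := by
    intro p; rw [hOdef]; dsimp only; split_ifs with h
    · exact dense_univ
    · exact dense_compl_pair hpart' h x₀
  have hG : Dense (⋂ p, O p) := dense_iInter_of_isOpen hOopen hOdense
  have hclosed : IsClosed {y' : EuclideanSpace ℝ (Fin d) | ⟪u k, y'⟫ + bb k ≤ f y'} :=
    isClosed_le ((Continuous.inner continuous_const continuous_id).add continuous_const) hcont
  suffices hGsub : (⋂ p, O p) ⊆ {y' : EuclideanSpace ℝ (Fin d) | ⟪u k, y'⟫ + bb k ≤ f y'} by
    have h1 : closure (⋂ p, O p) ⊆ {y' : EuclideanSpace ℝ (Fin d) | ⟪u k, y'⟫ + bb k ≤ f y'} :=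
      hclosed.closure_subset_iff.2 hGsub
    exact h1 (by rw [hG.closure_eq]; trivial)
  intro y hy
  simp only [Set.mem_setOf_eq]
  by_cases hyx0 : y = x₀
  · rw [hyx0]
    exact le_of_eq (haff' k _ (interior_subset hx₀)).symm
  set v := y - x₀ with hv
  have hvne : v ≠ 0 := sub_ne_zero.2 hyx0
  set ℓ : ℝ → EuclideanSpace ℝ (Fin d) := fun t => x₀ + t • v with hℓ
  have hℓcont : Continuous ℓ := continuous_const.add (continuous_id.smul continuous_const)
  have hl0 : ℓ 0 = x₀ := by rw [hℓ]; dsimp only; rw [zero_smul, add_zero]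
  have hl1 : ℓ 1 = y := by rw [hℓ]; dsimp only; rw [one_smul, hv, add_sub_cancel]
  have hseg : ∀ τ : ℝ, 0 ≤ τ → τ ≤ 1 →
      (ℓ τ ∈ ⋃ m, interior (R m)) ∨ ℓ τ ∈ frontierPoints R := by
    intro τ h0 h1
    by_contra hbad
    push_neg at hbad
    obtain ⟨hbad1, hbad2⟩ := hbad
    have hnotint : ∀ m, ℓ τ ∉ interior (R m) := fun m hm => hbad1 (Set.mem_iUnion.2 ⟨m, hm⟩)
    obtain ⟨k', l', hkl', hzk, hzl⟩ := bad_mem_pair hpart' hnotint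
    have hzpiece : ℓ τ ∈ (R k' ∩ R l') \ frontierPoints R := ⟨⟨hzk, hzl⟩, hbad2⟩
    have hx₀piece : x₀ ∉ R k' ∩ R l' := by
      intro hx₀p
      by_cases hk'k : k' = k
      · have hl'k : l' ≠ k := fun h => hkl' (hk'k.trans h.symm)
        exact not_mem_of_mem_interior hpart' hl'k hx₀ hx₀p.2
      · exact not_mem_of_mem_interior hpart' hk'k hx₀ hx₀p.1
    have hτpos : 0 < τ := by
      rcases eq_or_lt_of_le h0 with rfl | h
      · rw [hl0] at hzpiece
        exact absurd hzpiece.1 hx₀piece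
      · exact h
    have hycone : y ∈ coneSet x₀ ((R k' ∩ R l') \ frontierPoints R) := by
      refine ⟨τ⁻¹, by positivity, ℓ τ, hzpiece, ?_⟩
      rw [hℓ]
      dsimp only
      rw [add_sub_cancel_left, smul_smul, inv_mul_cancel₀ hτpos.ne', one_smul, hv]
      abel
    have hyO := Set.mem_iInter.1 hy (k', l')
    rw [hOdef] at hyO
    dsimp only at hyO
    rw [if_neg hkl'] at hyO
    exact hyO (subset_closure hycone)
  obtain ⟨δ₀, hδ₀, hballk⟩ := Metric.isOpen_iff.1 isOpen_interior x₀ hx₀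
  set g : ℝ → ℝ := fun t => f (ℓ t) - (⟪u k, ℓ t⟫ + bb k) with hg
  have hgcont : Continuous g :=
    (hcont.comp hℓcont).sub ((Continuous.inner continuous_const hℓcont).add continuous_const)
  have hnv : (0:ℝ) < ‖v‖ := norm_pos_iff.2 hvne
  set ε₀ : ℝ := min 1 (δ₀ / (2 * ‖v‖)) with hε₀
  have hε₀pos : 0 < ε₀ := lt_min one_pos (by positivity)
  have hε₀le1 : ε₀ ≤ 1 := min_le_left _ _
  have hg0 : ∀ τ ∈ Icc (0:ℝ) ε₀, g τ = 0 := by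
    intro τ hτ
    have hmem : ℓ τ ∈ R k := by
      apply interior_subset
      apply hballk
      rw [mem_ball, dist_eq_norm, hℓ]
      dsimp only
      rw [add_sub_cancel_left, norm_smul, Real.norm_eq_abs, abs_of_nonneg hτ.1]
      have h2 : τ ≤ δ₀ / (2 * ‖v‖) := le_trans hτ.2 (min_le_right _ _)
      have h3 : τ * ‖v‖ ≤ δ₀ / (2 * ‖v‖) * ‖v‖ := mul_le_mul_of_nonneg_right h2 hnv.le
      have h4 : δ₀ / (2 * ‖v‖) * ‖v‖ = δ₀ / 2 := by field_simp
      linarith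
    rw [hg]
    dsimp only
    rw [haff' k _ hmem]
    ring
  have hloccvx : ∀ T : ℝ, 0 < T → T ≤ 1 → ∃ δ₂ : ℝ, 0 < δ₂ ∧ δ₂ < T ∧
      ConvexOn ℝ (Icc (T - δ₂) (T + δ₂)) g := by
    intro T hT0 hT1
    rcases hseg T hT0.le hT1 with hintm | hfront
    · obtain ⟨m, hm⟩ := Set.mem_iUnion.1 hintm
      obtain ⟨δ₁, hδ₁, hballm⟩ := Metric.isOpen_iff.1 isOpen_interior _ hm
      refine ⟨min (T/2) (δ₁ / (2 * ‖v‖)), lt_min (by linarith) (by positivity),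
        lt_of_le_of_lt (min_le_left _ _) (by linarith), ?_⟩
      set δ₂ := min (T/2) (δ₁ / (2 * ‖v‖)) with hδ₂
      have hmem2 : ∀ τ ∈ Icc (T - δ₂) (T + δ₂), ℓ τ ∈ R m := by
        intro τ hτ
        apply interior_subset
        apply hballm
        rw [mem_ball, dist_eq_norm]
        have hde : ℓ τ - ℓ T = (τ - T) • v := by rw [hℓ]; dsimp only; module
        rw [hde, norm_smul, Real.norm_eq_abs]
        have h5 : |τ - T| ≤ δ₂ := abs_sub_le_iff.2 ⟨by linarith [hτ.2], by linarith [hτ.1]⟩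
        have h6 : δ₂ ≤ δ₁/(2*‖v‖) := min_le_right _ _
        have h7 : |τ - T| * ‖v‖ ≤ δ₁/(2*‖v‖) * ‖v‖ :=
          mul_le_mul_of_nonneg_right (le_trans h5 h6) hnv.le
        have h8 : δ₁/(2*‖v‖) * ‖v‖ = δ₁/2 := by field_simp
        linarith
      have haffg : ∀ τ ∈ Icc (T - δ₂) (T + δ₂),
          g τ = (⟪u m, v⟫ - ⟪u k, v⟫) * τ + (⟪u m, x₀⟫ + bb m - ⟪u k, x₀⟫ - bb k) := by
        intro τ hτ
        rw [hg]
        dsimp only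
        rw [haff' m _ (hmem2 τ hτ), hℓ]
        dsimp only
        rw [inner_add_right, inner_add_right, real_inner_smul_right, real_inner_smul_right]
        ring
      exact convexOn_congr (affine_convexOn _ _ (convex_Icc _ _)) haffg
    · obtain ⟨r', hr', hcvxf⟩ := hlocal _ hfront
      refine ⟨min (T/2) (r' / (2 * ‖v‖)), lt_min (by linarith) (by positivity),
        lt_of_le_of_lt (min_le_left _ _) (by linarith), ?_⟩
      set δ₂ := min (T/2) (r' / (2 * ‖v‖)) with hδ₂
      have hgsub : ∀ τ ∈ Icc (T - δ₂) (T + δ₂), ℓ τ ∈ ball (ℓ T) r' := by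
        intro τ hτ
        rw [mem_ball, dist_eq_norm]
        have hde : ℓ τ - ℓ T = (τ - T) • v := by rw [hℓ]; dsimp only; module
        rw [hde, norm_smul, Real.norm_eq_abs]
        have h5 : |τ - T| ≤ δ₂ := abs_sub_le_iff.2 ⟨by linarith [hτ.2], by linarith [hτ.1]⟩
        have h6 : δ₂ ≤ r'/(2*‖v‖) := min_le_right _ _
        have h7 : |τ - T| * ‖v‖ ≤ r'/(2*‖v‖) * ‖v‖ :=
          mul_le_mul_of_nonneg_right (le_trans h5 h6) hnv.le
        have h8 : r'/(2*‖v‖) * ‖v‖ = r'/2 := by field_simp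
        linarith
      have hΛ : ConvexOn ℝ ((AffineMap.lineMap x₀ y : ℝ →ᵃ[ℝ] EuclideanSpace ℝ (Fin d)) ⁻¹'
          (ball (ℓ T) r')) (f ∘ (AffineMap.lineMap x₀ y : ℝ →ᵃ[ℝ] EuclideanSpace ℝ (Fin d))) :=
        hcvxf.comp_affineMap _
      have hlm : ∀ τ : ℝ, (AffineMap.lineMap x₀ y : ℝ →ᵃ[ℝ] EuclideanSpace ℝ (Fin d)) τ = ℓ τ := by
        intro τ
        rw [AffineMap.lineMap_apply_module', hℓ]
        dsimp only
        rw [hv]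
        abel
      have hfℓ : ConvexOn ℝ (Icc (T - δ₂) (T + δ₂)) (f ∘ ℓ) := by
        have hsubset : Icc (T - δ₂) (T + δ₂) ⊆
            (AffineMap.lineMap x₀ y : ℝ →ᵃ[ℝ] EuclideanSpace ℝ (Fin d)) ⁻¹' (ball (ℓ T) r') := by
          intro τ hτ
          rw [Set.mem_preimage, hlm τ]
          exact hgsub τ hτ
        have hres := hΛ.subset hsubset (convex_Icc _ _)
        refine convexOn_congr hres ?_
        intro τ _
        simp only [Function.comp_apply, hlm τ]
      have haffpart : ConvexOn ℝ (Icc (T - δ₂) (T + δ₂))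
          (fun τ => (-⟪u k, v⟫) * τ + (-(⟪u k, x₀⟫ + bb k))) :=
        affine_convexOn _ _ (convex_Icc _ _)
      have hsum := hfℓ.add haffpart
      refine convexOn_congr hsum ?_
      intro τ _
      simp only [Pi.add_apply, Function.comp_apply]
      rw [hg]
      dsimp only
      rw [hℓ]
      dsimp only
      rw [inner_add_right, real_inner_smul_right]
      ring
  set Aset : Set ℝ := {t | t ∈ Icc ε₀ 1 ∧ ConvexOn ℝ (Icc 0 t) g} with hAset
  have hε₀A : ε₀ ∈ Aset := by
    refine ⟨⟨le_rfl, hε₀le1⟩, convex_Icc _ _, ?_⟩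
    intro p hp q hq α β hα hβ hαβ
    have hc : α • p + β • q ∈ Icc (0:ℝ) ε₀ := (convex_Icc _ _) hp hq hα hβ hαβ
    rw [hg0 _ hc, hg0 _ hp, hg0 _ hq]
    simp
  have hbdd : BddAbove Aset := ⟨1, fun t ht => ht.1.2⟩
  have hAne : Aset.Nonempty := ⟨ε₀, hε₀A⟩
  set T := sSup Aset with hT
  have hTmem1 : ε₀ ≤ T := le_csSup hbdd hε₀A
  have hTle1 : T ≤ 1 := csSup_le hAne (fun t ht => ht.1.2)
  have hT0 : 0 < T := lt_of_lt_of_le hε₀pos hTmem1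
  have hTcvx : ConvexOn ℝ (Icc 0 T) g := by
    apply convexOn_Icc_of_forall_lt hT0 hgcont
    intro t _ htT
    obtain ⟨s, hsA, hts⟩ := exists_lt_of_lt_csSup hAne htT
    exact hsA.2.subset (Icc_subset_Icc le_rfl hts.le) (convex_Icc _ _)
  have hT1 : T = 1 := by
    by_contra hne
    have hTlt1 : T < 1 := lt_of_le_of_ne hTle1 hne
    obtain ⟨δ₂, hδ₂pos, hδ₂T, hcvxloc⟩ := hloccvx T hT0 hTle1
    have hglue : ConvexOn ℝ (Icc 0 (min 1 (T + δ₂))) g := by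
      apply convexOn_Icc_glue (a := (0:ℝ)) (b := T - δ₂) (c := T) (e := min 1 (T + δ₂))
        (by linarith) (by linarith) (le_min hTle1 (by linarith)) hTcvx
      exact hcvxloc.subset (Icc_subset_Icc le_rfl (min_le_right _ _)) (convex_Icc _ _)
    have hmemA : min 1 (T + δ₂) ∈ Aset :=
      ⟨⟨le_min hε₀le1 (by linarith), min_le_left _ _⟩, hglue⟩
    have hle := le_csSup hbdd hmemA
    have hgt : T < min 1 (T + δ₂) := lt_min hTlt1 (by linarith)
    rw [← hT] at hle
    linarith
  have hfin : 0 ≤ g 1 := by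
    rcases eq_or_lt_of_le hε₀le1 with heq | hlt
    · have h0 := hg0 ε₀ ⟨hε₀pos.le, le_rfl⟩
      rw [heq] at h0
      exact ge_of_eq h0
    · have hcvx1 : ConvexOn ℝ (Icc (0:ℝ) 1) g := hT1 ▸ hTcvx
      have h01 : (0:ℝ) ∈ Icc (0:ℝ) 1 := ⟨le_rfl, zero_le_one⟩
      have h11 : (1:ℝ) ∈ Icc (0:ℝ) 1 := ⟨zero_le_one, le_rfl⟩
      have hineq := hcvx1.2 h01 h11 (by linarith : (0:ℝ) ≤ 1 - ε₀) hε₀pos.le (by ring)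
      simp only [smul_eq_mul, mul_zero, mul_one, zero_add] at hineq
      rw [hg0 ε₀ ⟨hε₀pos.le, le_rfl⟩, hg0 0 ⟨le_rfl, hε₀pos.le⟩] at hineq
      nlinarith [hineq, hε₀pos]
  rw [hg] at hfin
  dsimp only at hfin
  rw [hl1] at hfin
  linarith
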